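/- arXiv:2501.01556 — 6 statements merged into one kernel-verified Lean document; each statement's English description precedes it below -/
import Mathlib

section
/- Let p and ν be positive probability vectors on {1,…,n} with ν having rational entries, and let d be a positive integer such that d·ν_i is a natural number for every i. Then the limit as k → ∞ of (1/(k·d))·log( ( (k·d)! / ∏_{i=1}^n (k·d·ν_i)! ) · ∏_{i=1}^n p_i^{k·d·ν_i} ) exists and equals −S(ν|p) = −Σ_{i=1}^n ν_i · log(ν_i/p_i) (the Kullback–Leibler divergence as the Sanov rate of the probability of an empirical frequency under i.i.d. sampling). -/
open Real Filter

/-- `p` is a positive probability vector on `{1,…,n}`. -/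
def IsPPV {n : ℕ} (p : Fin n → ℝ) : Prop := (∀ i, 0 < p i) ∧ (∑ i, p i) = 1

/-- Relative entropy (KL divergence) `S(ν|p) = ∑ i, ν i · log (ν i / p i)`. -/
noncomputable def relEnt {n : ℕ} (ν p : Fin n → ℝ) : ℝ := ∑ i, ν i * Real.log (ν i / p i)

noncomputable def Lfun (N : ℕ) : ℝ := Real.log N.factorial - ((N : ℝ) * Real.log N - N)

lemma Lfun_tendsto : Tendsto (fun N : ℕ => Lfun N / N) atTop (nhds 0) := by
  have h1 : Tendsto (fun N : ℕ => Real.log (Stirling.stirlingSeq N)) atTop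
      (nhds (Real.log (Real.sqrt π))) :=
    ((Real.continuousAt_log (by positivity)).tendsto).comp Stirling.tendsto_stirlingSeq_sqrt_pi
  have h2 : Tendsto (fun N : ℕ => Real.log (Stirling.stirlingSeq N) / N) atTop (nhds 0) :=
    h1.div_atTop tendsto_natCast_atTop_atTop
  have h3 : Tendsto (fun N : ℕ => (1/2) * Real.log (2 * N) / N) atTop (nhds 0) := by
    have hb : Tendsto (fun x : ℝ => Real.log x / x) atTop (nhds 0) :=
      Real.isLittleO_log_id_atTop.tendsto_div_nhds_zero
    have hc : Tendsto (fun N : ℕ => (2 * N : ℝ)) atTop atTop :=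
      (tendsto_natCast_atTop_atTop).const_mul_atTop (by norm_num)
    have := (hb.comp hc).const_mul 1
    simp only [Function.comp] at this
    have h4 : Tendsto (fun N : ℕ => 1 * (Real.log (2 * N) / (2 * N))) atTop (nhds (1 * 0)) := this
    rw [one_mul] at h4
    refine h4.congr' ?_
    filter_upwards [eventually_ge_atTop 1] with N hN
    have hN0 : (0:ℝ) < N := by exact_mod_cast hN
    field_simp
  have := (h2.add h3)
  rw [add_zero] at this
  refine this.congr' ?_
  filter_upwards [eventually_ge_atTop 1] with N hN
  have hN0 : (0:ℝ) < N := by exact_mod_cast Nat.succ_le_iff.mp hN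
  have hform := Stirling.log_stirlingSeq_formula N
  have hlogdiv : Real.log ((N : ℝ) / Real.exp 1) = Real.log N - 1 := by
    rw [Real.log_div (ne_of_gt hN0) (Real.exp_ne_zero 1), Real.log_exp]
  rw [hlogdiv] at hform
  simp only [Lfun]
  rw [hform]
  field_simp
  ring

/-- Sanov's rate: the probability of observing empirical frequency `ν` under i.i.d.
sampling from `p`, namely the multinomial coefficient times `∏ i p i ^ (N·ν i)`,
decays at exponential rate `−S(ν|p)`:
`(1/(k·d))·log( ((k·d)! / ∏ i (k·d·ν i)!) · ∏ i p i ^ (k·d·ν i) ) → −S(ν|p)`. -/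
theorem sanov_rate_kl
    {n : ℕ} (hn : 1 ≤ n) (p ν : Fin n → ℝ) (hp : IsPPV p) (hν : IsPPV ν)
    (d : ℕ) (hd : 0 < d) (a : Fin n → ℕ) (ha : ∀ i, (a i : ℝ) = d * ν i) :
    Tendsto
      (fun k : ℕ =>
        (1 / ((k : ℝ) * d)) *
          Real.log ((((k * d).factorial : ℝ) / ∏ i, ((k * a i).factorial : ℝ)) *
            ∏ i, p i ^ (k * a i)))
      atTop (nhds (-relEnt ν p)) := by
  obtain ⟨hp_pos, hp_sum⟩ := hp
  obtain ⟨hν_pos, hν_sum⟩ := hν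
  have hDR : (0:ℝ) < d := by exact_mod_cast hd
  have haR : ∀ i, (0:ℝ) < a i := fun i => by rw [ha i]; exact mul_pos hDR (hν_pos i)
  have ha_pos : ∀ i, 0 < a i := fun i => by exact_mod_cast haR i
  have ha_sumR : ∑ i, (a i : ℝ) = d := by
    rw [Finset.sum_congr rfl fun i _ => ha i, ← Finset.mul_sum, hν_sum, mul_one]
  have hν_eq : ∀ i, ν i = (a i : ℝ) / d := fun i => by
    rw [ha i]; field_simp
  have hrel : -relEnt ν p
      = Real.log d - ∑ i, ν i * Real.log (a i) + ∑ i, ν i * Real.log (p i) := by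
    unfold relEnt
    have hterm : ∀ i ∈ Finset.univ, ν i * Real.log (ν i / p i)
        = ν i * Real.log (a i) - ν i * Real.log d - ν i * Real.log (p i) := by
      intro i _
      rw [hν_eq i, Real.log_div (ne_of_gt (div_pos (haR i) hDR)) (ne_of_gt (hp_pos i)),
        Real.log_div (ne_of_gt (haR i)) (ne_of_gt hDR)]
      ring
    rw [Finset.sum_congr rfl hterm, Finset.sum_sub_distrib, Finset.sum_sub_distrib,
      ← Finset.sum_mul, hν_sum, one_mul]
    ring
  have key : ∀ᶠ k : ℕ in atTop,
      (1 / ((k : ℝ) * d)) *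
          Real.log ((((k * d).factorial : ℝ) / ∏ i, ((k * a i).factorial : ℝ)) *
            ∏ i, p i ^ (k * a i))
      = Lfun (k*d) / ((k:ℝ)*d) - ∑ i, ν i * (Lfun (k * a i) / ((k:ℝ) * (a i)))
        + (- relEnt ν p) := by
    filter_upwards [eventually_ge_atTop 1] with k hk
    have hkR : (0:ℝ) < k := by exact_mod_cast Nat.succ_le_iff.mp hk
    have hKD : (0:ℝ) < (k:ℝ)*d := mul_pos hkR hDR
    have hf1 : (0:ℝ) < ((k*d).factorial : ℝ) := by exact_mod_cast (k*d).factorial_pos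
    have hf2 : ∀ i, (0:ℝ) < ((k*a i).factorial : ℝ) :=
      fun i => by exact_mod_cast (k*(a i)).factorial_pos
    have hf3 : (0:ℝ) < ∏ i, ((k * a i).factorial : ℝ) :=
      Finset.prod_pos fun i _ => hf2 i
    have hf4 : (0:ℝ) < ∏ i, p i ^ (k * a i) :=
      Finset.prod_pos fun i _ => pow_pos (hp_pos i) _
    have hlog : Real.log ((((k * d).factorial : ℝ) / ∏ i, ((k * a i).factorial : ℝ)) *
            ∏ i, p i ^ (k * a i))
        = Real.log ((k*d).factorial : ℝ) - ∑ i, Real.log ((k * a i).factorial : ℝ)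
          + ∑ i, ((k * a i : ℕ) : ℝ) * Real.log (p i) := by
      rw [Real.log_mul (ne_of_gt (div_pos hf1 hf3)) (ne_of_gt hf4),
        Real.log_div (ne_of_gt hf1) (ne_of_gt hf3),
        Real.log_prod (fun i _ => ne_of_gt (hf2 i)),
        Real.log_prod (fun i _ => ne_of_gt (pow_pos (hp_pos i) _))]
      congr 1
      exact Finset.sum_congr rfl fun i _ => by rw [Real.log_pow]
    have P1 : (1/((k:ℝ)*d)) * Real.log ((k*d).factorial : ℝ)
        = Lfun (k*d) / ((k:ℝ)*d) + Real.log k + Real.log d - 1 := by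
      have hc : ((k*d : ℕ) : ℝ) = (k:ℝ)*d := by push_cast; ring
      have hLf : Lfun (k*d) = Real.log ((k*d).factorial : ℝ)
          - ((k:ℝ)*d*(Real.log k + Real.log d) - (k:ℝ)*d) := by
        unfold Lfun
        rw [hc, Real.log_mul (ne_of_gt hkR) (ne_of_gt hDR)]
      rw [hLf]
      field_simp
      ring
    have P2 : ∀ i ∈ Finset.univ, (1/((k:ℝ)*d)) * Real.log ((k * a i).factorial : ℝ)
        = ν i * (Lfun (k * a i) / ((k:ℝ) * (a i)))
          + ν i * Real.log k + ν i * Real.log (a i) - ν i := by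
      intro i _
      have hc : ((k * a i : ℕ) : ℝ) = (k:ℝ)*(a i) := by push_cast; ring
      have hLf : Lfun (k * a i) = Real.log ((k * a i).factorial : ℝ)
          - ((k:ℝ)*(a i)*(Real.log k + Real.log (a i)) - (k:ℝ)*(a i)) := by
        unfold Lfun
        rw [hc, Real.log_mul (ne_of_gt hkR) (ne_of_gt (haR i))]
      rw [hLf, hν_eq i]
      have hai := (haR i).ne'
      field_simp
      ring
    have P3 : ∀ i ∈ Finset.univ, (1/((k:ℝ)*d)) * (((k * a i : ℕ) : ℝ) * Real.log (p i))
        = ν i * Real.log (p i) := by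
      intro i _
      have hc : ((k * a i : ℕ) : ℝ) = (k:ℝ)*(a i) := by push_cast; ring
      rw [hc, hν_eq i]
      field_simp
    rw [hlog, hrel, mul_add, mul_sub, Finset.mul_sum, Finset.mul_sum, P1,
      Finset.sum_congr rfl P2, Finset.sum_congr rfl P3,
      Finset.sum_sub_distrib, Finset.sum_add_distrib, Finset.sum_add_distrib,
      ← Finset.sum_mul, hν_sum, one_mul]
    ring
  have hcomp : ∀ m : ℕ, 0 < m →
      Tendsto (fun k : ℕ => Lfun (k*m) / ((k:ℝ)*m)) atTop (nhds 0) := by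
    intro m hm
    have h1 : Tendsto (fun k : ℕ => k * m) atTop atTop :=
      tendsto_atTop_atTop.mpr fun b => ⟨b, fun k hk =>
        le_trans hk (Nat.le_mul_of_pos_right k hm)⟩
    have := Lfun_tendsto.comp h1
    refine this.congr fun k => ?_
    simp [Function.comp, Nat.cast_mul]
  have hA := hcomp d hd
  have hB : Tendsto (fun k : ℕ => ∑ i, ν i * (Lfun (k * a i) / ((k:ℝ) * (a i))))
      atTop (nhds 0) := by
    have h0 : (0:ℝ) = ∑ i : Fin n, (0:ℝ) := by simp
    rw [h0]
    exact tendsto_finset_sum _ fun i _ => by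
      simpa using (hcomp (a i) (ha_pos i)).const_mul (ν i)
  have glim := (hA.sub hB).add (tendsto_const_nhds (x := -relEnt ν p))
  rw [sub_zero, zero_add] at glim
  exact Tendsto.congr' (Filter.EventuallyEq.symm key) glim
end

section
/- For every μ ∈ ℝⁿ, the supremum of μᵀν − S(ν|p) over all positive probability vectors ν equals F(μ|p), and the supremum is attained exactly at ν = p^μ (the free energy is the Legendre–Fenchel transform of the relative entropy). -/
open Real

/-- Free energy `F(μ|p) = log (∑ i, p i · exp (μ i))`. -/
noncomputable def freeEnergy {n : ℕ} (p μ : Fin n → ℝ) : ℝ :=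
  Real.log (∑ i, p i * Real.exp (μ i))

/-- Exponentially tilted measure `(p^μ)_i = p i · exp (μ i − F(μ|p))`. -/
noncomputable def tilted {n : ℕ} (p μ : Fin n → ℝ) : Fin n → ℝ :=
  fun i => p i * Real.exp (μ i - freeEnergy p μ)

/-- Gibbs' inequality with equality case. -/
lemma gibbs_aux {n : ℕ} {ν q : Fin n → ℝ} (hν : IsPPV ν) (hq : IsPPV q) :
    0 ≤ relEnt ν q ∧ (relEnt ν q = 0 → ν = q) := by
  obtain ⟨hν0, hν1⟩ := hν
  obtain ⟨hq0, hq1⟩ := hq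
  have key : ∀ i, 0 ≤ q i - ν i - ν i * Real.log (q i / ν i) := by
    intro i
    have hx : 0 < q i / ν i := div_pos (hq0 i) (hν0 i)
    have := Real.log_le_sub_one_of_pos hx
    have h2 : ν i * Real.log (q i / ν i) ≤ ν i * (q i / ν i - 1) :=
      mul_le_mul_of_nonneg_left this (le_of_lt (hν0 i))
    have h3 : ν i * (q i / ν i - 1) = q i - ν i := by
      rw [mul_sub, mul_div_cancel₀ _ (ne_of_gt (hν0 i)), mul_one]
    linarith
  have hlogswap : ∀ i, ν i * Real.log (ν i / q i) = -(ν i * Real.log (q i / ν i)) := by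
    intro i
    rw [Real.log_div (ne_of_gt (hν0 i)) (ne_of_gt (hq0 i)),
        Real.log_div (ne_of_gt (hq0 i)) (ne_of_gt (hν0 i))]
    ring
  have hsum : relEnt ν q = ∑ i, (q i - ν i - ν i * Real.log (q i / ν i)) := by
    unfold relEnt
    rw [Finset.sum_congr rfl fun i _ => hlogswap i, Finset.sum_neg_distrib,
        Finset.sum_sub_distrib, Finset.sum_sub_distrib, hq1, hν1]
    ring
  constructor
  · rw [hsum]; exact Finset.sum_nonneg fun i _ => key i
  · intro h0
    have hz : ∀ i ∈ Finset.univ, q i - ν i - ν i * Real.log (q i / ν i) = 0 := by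
      rw [← Finset.sum_eq_zero_iff_of_nonneg (fun i _ => key i), ← hsum, h0]
    funext i
    have hi := hz i (Finset.mem_univ i)
    have hx : 0 < q i / ν i := div_pos (hq0 i) (hν0 i)
    by_contra hne
    have hne1 : q i / ν i ≠ 1 := by
      intro h1
      exact hne ((div_eq_one_iff_eq (ne_of_gt (hν0 i))).mp h1).symm
    have hlt := Real.log_lt_sub_one_of_pos hx hne1
    have h2 : ν i * Real.log (q i / ν i) < ν i * (q i / ν i - 1) :=
      mul_lt_mul_of_pos_left hlt (hν0 i)
    have h3 : ν i * (q i / ν i - 1) = q i - ν i := by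
      rw [mul_sub, mul_div_cancel₀ _ (ne_of_gt (hν0 i)), mul_one]
    linarith

/-- The free energy is the Legendre–Fenchel transform of the relative entropy:
`sup { μᵀν − S(ν|p) : ν a positive probability vector } = F(μ|p)`, attained exactly
at `ν = p^μ`. -/
theorem freeEnergy_is_LF_of_relEnt
    {n : ℕ} (hn : 1 ≤ n) (p : Fin n → ℝ) (hp : IsPPV p) (μ : Fin n → ℝ) :
    (∀ ν : Fin n → ℝ, IsPPV ν →
        (∑ i, μ i * ν i) - relEnt ν p ≤ freeEnergy p μ) ∧
    (IsPPV (tilted p μ) ∧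
      (∑ i, μ i * tilted p μ i) - relEnt (tilted p μ) p = freeEnergy p μ) ∧
    (∀ ν : Fin n → ℝ, IsPPV ν →
        (∑ i, μ i * ν i) - relEnt ν p = freeEnergy p μ → ν = tilted p μ) := by
  obtain ⟨hp0, hp1⟩ := hp
  set F := freeEnergy p μ with hF
  have hSpos : 0 < ∑ i, p i * Real.exp (μ i) := by
    exact Finset.sum_pos (fun i _ => mul_pos (hp0 i) (Real.exp_pos _)) ⟨⟨0, hn⟩, Finset.mem_univ _⟩
  have hexpF : Real.exp F = ∑ i, p i * Real.exp (μ i) := Real.exp_log hSpos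
  have htPPV : IsPPV (tilted p μ) := by
    constructor
    · intro i; exact mul_pos (hp0 i) (Real.exp_pos _)
    · have : ∑ i, tilted p μ i = (∑ i, p i * Real.exp (μ i)) * Real.exp (-F) := by
        rw [Finset.sum_mul]
        apply Finset.sum_congr rfl
        intro i _
        unfold tilted
        rw [Real.exp_sub, Real.exp_neg]
        field_simp
        rfl
      rw [this, ← hexpF, ← Real.exp_add]
      simp
  -- key identity: for PPV ν, relEnt ν (tilted p μ) = relEnt ν p - ∑ μ i * ν i + F
  have hident : ∀ ν : Fin n → ℝ, IsPPV ν →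
      relEnt ν (tilted p μ) = relEnt ν p - (∑ i, μ i * ν i) + F := by
    intro ν ⟨hν0, hν1⟩
    unfold relEnt
    have : ∀ i, ν i * Real.log (ν i / tilted p μ i)
        = ν i * Real.log (ν i / p i) - μ i * ν i + F * ν i := by
      intro i
      unfold tilted
      rw [div_mul_eq_div_div, Real.log_div (div_ne_zero (ne_of_gt (hν0 i)) (ne_of_gt (hp0 i))) (Real.exp_ne_zero _),
          Real.log_exp]
      ring
    rw [Finset.sum_congr rfl fun i _ => this i, Finset.sum_add_distrib,
        Finset.sum_sub_distrib, ← Finset.mul_sum, hν1]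
    ring
  refine ⟨?_, ⟨htPPV, ?_⟩, ?_⟩
  · intro ν hν
    have h := (gibbs_aux hν htPPV).1
    rw [hident ν hν] at h
    linarith
  · have h0 : relEnt (tilted p μ) (tilted p μ) = 0 := by
      unfold relEnt
      apply Finset.sum_eq_zero
      intro i _
      rw [div_self (ne_of_gt (htPPV.1 i)), Real.log_one, mul_zero]
    have := hident (tilted p μ) htPPV
    rw [h0] at this
    linarith
  · intro ν hν heq
    have h := hident ν hν
    have h0 : relEnt ν (tilted p μ) = 0 := by rw [h]; linarith
    exact (gibbs_aux hν htPPV).2 h0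
end

section
/- For every positive probability vector ν on {1,…,n}, S(ν|p) = sup{ μᵀν − F(μ|p) : μ ∈ ℝⁿ } (the relative entropy is the Legendre–Fenchel transform of the free energy). -/
open Real

/-- The relative entropy is the Legendre–Fenchel transform of the free energy:
`S(ν|p) = sup { μᵀν − F(μ|p) : μ ∈ ℝⁿ }`. -/
theorem relEnt_is_LF_of_freeEnergy
    {n : ℕ} (hn : 1 ≤ n) (p : Fin n → ℝ) (hp : IsPPV p)
    (ν : Fin n → ℝ) (hν : IsPPV ν) :
    IsLUB { t : ℝ | ∃ μ : Fin n → ℝ, t = (∑ i, μ i * ν i) - freeEnergy p μ }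
      (relEnt ν p) := by
  obtain ⟨hppos, hpsum⟩ := hp
  obtain ⟨hνpos, hνsum⟩ := hν
  constructor
  · -- upper bound
    rintro t ⟨μ, rfl⟩
    have key : ∑ i, ν i * Real.log ((p i * Real.exp (μ i)) / ν i)
        ≤ Real.log (∑ i, p i * Real.exp (μ i)) := by
      have hconc : ConcaveOn ℝ (Set.Ioi 0) Real.log :=
        strictConcaveOn_log_Ioi.concaveOn
      have h := hconc.le_map_sum (t := Finset.univ)
        (w := ν) (p := fun i => (p i * Real.exp (μ i)) / ν i)
        (fun i _ => (hνpos i).le) hνsum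
        (fun i _ => div_pos (mul_pos (hppos i) (Real.exp_pos _)) (hνpos i))
      have hsum : ∑ i, ν i * ((p i * Real.exp (μ i)) / ν i)
          = ∑ i, p i * Real.exp (μ i) := by
        refine Finset.sum_congr rfl fun i _ => ?_
        rw [mul_comm, div_mul_cancel₀ _ (hνpos i).ne']
      simpa [smul_eq_mul, hsum] using h
    have hlog : ∀ i, Real.log ((p i * Real.exp (μ i)) / ν i)
        = μ i - Real.log (ν i / p i) := by
      intro i
      rw [Real.log_div (mul_pos (hppos i) (Real.exp_pos _)).ne' (hνpos i).ne',
        Real.log_mul (hppos i).ne' (Real.exp_pos _).ne', Real.log_exp,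
        Real.log_div (hνpos i).ne' (hppos i).ne']
      ring
    have hrw : ∑ i, ν i * Real.log ((p i * Real.exp (μ i)) / ν i)
        = (∑ i, μ i * ν i) - relEnt ν p := by
      simp only [hlog, mul_sub, Finset.sum_sub_distrib, relEnt]
      rw [Finset.sum_congr rfl fun i _ => mul_comm (ν i) (μ i)]
    rw [hrw] at key
    simp only [Set.mem_setOf_eq, freeEnergy]
    linarith
  · -- lowest upper bound: the value is attained
    intro b hb
    have : relEnt ν p ∈
        { t : ℝ | ∃ μ : Fin n → ℝ, t = (∑ i, μ i * ν i) - freeEnergy p μ } := by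
      refine ⟨fun i => Real.log (ν i / p i), ?_⟩
      have h1 : ∑ i, p i * Real.exp (Real.log (ν i / p i)) = 1 := by
        calc ∑ i, p i * Real.exp (Real.log (ν i / p i))
            = ∑ i, ν i := by
              refine Finset.sum_congr rfl fun i _ => ?_
              rw [Real.exp_log (div_pos (hνpos i) (hppos i)), mul_div_cancel₀ _ (hppos i).ne']
          _ = 1 := hνsum
      simp [freeEnergy, h1, relEnt, mul_comm]
    exact hb this
end

section
/- For every α ∈ ℝ^k, the supremum of αᵀ(Xν) − φ(Xν|p) over all positive probability vectors ν equals ψ(α|p) = log(Σ_{i=1}^n p_i e^{αᵀx_i}); that is, the Legendre–Fenchel transform of the contracted rate function φ(·|p) over attainable empirical means is the lift F(Xᵀα|p) of the free energy. -/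
open Real

/-- Contracted rate function `φ(x|p) = inf { S(ν|p) : ν a positive probability
vector with Xν = x }`. -/
noncomputable def phi {n k : ℕ} (X : Matrix (Fin k) (Fin n) ℝ) (p : Fin n → ℝ)
    (x : Fin k → ℝ) : ℝ :=
  sInf { t : ℝ | ∃ ν : Fin n → ℝ, IsPPV ν ∧ X.mulVec ν = x ∧ t = relEnt ν p }

/-- `ψ(α|p) = log (∑ i, p i · exp (αᵀ x_i))`, where `x_i` are the columns of `X`. -/
noncomputable def psi {n k : ℕ} (X : Matrix (Fin k) (Fin n) ℝ) (p : Fin n → ℝ)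
    (α : Fin k → ℝ) : ℝ :=
  Real.log (∑ i, p i * Real.exp (∑ a, α a * X a i))

/-- Gibbs' inequality: `∑ ν_i c_i − S(ν|p) ≤ log ∑ p_i e^{c_i}`. -/
lemma gibbs {n : ℕ} {p ν : Fin n → ℝ} (hp : IsPPV p) (hν : IsPPV ν) (c : Fin n → ℝ) :
    (∑ i, ν i * c i) - relEnt ν p ≤ Real.log (∑ i, p i * Real.exp (c i)) := by
  have hne : (Finset.univ : Finset (Fin n)).Nonempty := by
    rcases (Finset.univ : Finset (Fin n)).eq_empty_or_nonempty with h | h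
    · exfalso; have h2 := hν.2; rw [h] at h2; simp at h2
    · exact h
  set Z := ∑ i, p i * Real.exp (c i) with hZdef
  have hZpos : 0 < Z := Finset.sum_pos (fun i _ => mul_pos (hp.1 i) (Real.exp_pos _)) hne
  have hterm : ∀ i, ν i * c i - ν i * Real.log (ν i / p i)
      ≤ ν i * Real.log Z + (p i * Real.exp (c i) / Z - ν i) := by
    intro i
    have hνi := hν.1 i
    have hpi := hp.1 i
    have h1 : c i - Real.log (ν i / p i)
        = Real.log (p i * Real.exp (c i) / (Z * ν i)) + Real.log Z := by
      rw [Real.log_div (mul_ne_zero hpi.ne' (Real.exp_ne_zero _)) (mul_ne_zero hZpos.ne' hνi.ne'),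
        Real.log_mul hpi.ne' (Real.exp_ne_zero _),
        Real.log_mul hZpos.ne' hνi.ne', Real.log_exp,
        Real.log_div hνi.ne' hpi.ne']
      ring
    have h2 : Real.log (p i * Real.exp (c i) / (Z * ν i))
        ≤ p i * Real.exp (c i) / (Z * ν i) - 1 :=
      Real.log_le_sub_one_of_pos (by positivity)
    calc ν i * c i - ν i * Real.log (ν i / p i)
        = ν i * (c i - Real.log (ν i / p i)) := by ring
      _ = ν i * (Real.log (p i * Real.exp (c i) / (Z * ν i)) + Real.log Z) := by rw [h1]
      _ ≤ ν i * ((p i * Real.exp (c i) / (Z * ν i) - 1) + Real.log Z) := by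
          apply mul_le_mul_of_nonneg_left _ hνi.le
          linarith
      _ = ν i * Real.log Z + (p i * Real.exp (c i) / Z - ν i) := by
          field_simp
          ring
  have hsum := Finset.sum_le_sum (s := (Finset.univ : Finset (Fin n))) (fun i _ => hterm i)
  have hL : ∑ i, (ν i * c i - ν i * Real.log (ν i / p i))
      = (∑ i, ν i * c i) - relEnt ν p := by
    unfold relEnt; rw [Finset.sum_sub_distrib]
  have hR : ∑ i, (ν i * Real.log Z + (p i * Real.exp (c i) / Z - ν i)) = Real.log Z := by
    have h1 : ∑ i, ν i * Real.log Z = Real.log Z := by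
      rw [← Finset.sum_mul, hν.2, one_mul]
    have h2 : ∑ i, p i * Real.exp (c i) / Z = 1 := by
      rw [← Finset.sum_div]; exact div_self (ne_of_gt hZpos)
    rw [Finset.sum_add_distrib, h1, Finset.sum_sub_distrib, h2, hν.2]; ring
  rw [hL, hR] at hsum
  exact hsum

/-- The Legendre–Fenchel transform of the contracted rate function `φ(·|p)` over
attainable empirical means equals `ψ(α|p)`, the lift `F(Xᵀα|p)` of the free energy:
`sup { αᵀ(Xν) − φ(Xν|p) : ν a positive probability vector } = ψ(α|p)`. -/
theorem psi_is_LF_of_phi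
    {n k : ℕ} (hn : 1 ≤ n) (hk : 1 ≤ k)
    (p : Fin n → ℝ) (hp : IsPPV p) (X : Matrix (Fin k) (Fin n) ℝ) (α : Fin k → ℝ) :
    IsLUB { t : ℝ | ∃ ν : Fin n → ℝ, IsPPV ν ∧
        t = (∑ a, α a * X.mulVec ν a) - phi X p (X.mulVec ν) }
      (psi X p α) := by
  set c : Fin n → ℝ := fun i => ∑ a, α a * X a i with hc
  haveI : NeZero n := ⟨Nat.one_le_iff_ne_zero.mp hn⟩
  have hne : (Finset.univ : Finset (Fin n)).Nonempty := Finset.univ_nonempty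
  set Z := ∑ i, p i * Real.exp (c i) with hZdef
  have hZpos : 0 < Z := Finset.sum_pos (fun i _ => mul_pos (hp.1 i) (Real.exp_pos _)) hne
  have hpsi : psi X p α = Real.log Z := rfl
  have hdot : ∀ ν : Fin n → ℝ, (∑ a, α a * X.mulVec ν a) = ∑ i, ν i * c i := by
    intro ν
    simp only [Matrix.mulVec, dotProduct, Finset.mul_sum, hc]
    rw [Finset.sum_comm]
    exact Finset.sum_congr rfl (fun i _ => Finset.sum_congr rfl (fun a _ => by ring))
  have hphi_ge : ∀ ν : Fin n → ℝ, IsPPV ν →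
      (∑ i, ν i * c i) - Real.log Z ≤ phi X p (X.mulVec ν) := by
    intro ν hν
    refine le_csInf ⟨relEnt ν p, ⟨ν, hν, rfl, rfl⟩⟩ ?_
    rintro t ⟨ν', hν', hXν', rfl⟩
    have h1 : ∑ i, ν' i * c i = ∑ i, ν i * c i := by rw [← hdot, ← hdot, hXν']
    have h2 := gibbs hp hν' c
    rw [h1] at h2
    linarith
  have hphi_le : ∀ ν : Fin n → ℝ, IsPPV ν → phi X p (X.mulVec ν) ≤ relEnt ν p := by
    intro ν hν
    apply csInf_le
    · refine ⟨(∑ i, ν i * c i) - Real.log Z, ?_⟩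
      rintro t ⟨ν', hν', hXν', rfl⟩
      have h1 : ∑ i, ν' i * c i = ∑ i, ν i * c i := by rw [← hdot, ← hdot, hXν']
      have h2 := gibbs hp hν' c
      rw [h1] at h2
      linarith
    · exact ⟨ν, hν, rfl, rfl⟩
  constructor
  · rintro t ⟨ν, hν, rfl⟩
    rw [hdot, hpsi]
    have := hphi_ge ν hν
    linarith
  · intro b hb
    set νs : Fin n → ℝ := fun i => p i * Real.exp (c i) / Z with hνs
    have hνsP : IsPPV νs := by
      constructor
      · intro i
        have := hp.1 i
        positivity
      · rw [hνs]
        simp only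
        rw [← Finset.sum_div]
        exact div_self (ne_of_gt hZpos)
    have hrel : relEnt νs p = (∑ i, νs i * c i) - Real.log Z := by
      unfold relEnt
      have hterm : ∀ i, νs i * Real.log (νs i / p i) = νs i * c i - νs i * Real.log Z := by
        intro i
        have hpi := (hp.1 i).ne'
        have hq : νs i / p i = Real.exp (c i) / Z := by
          rw [hνs]
          field_simp
        rw [hq, Real.log_div (Real.exp_ne_zero _) (ne_of_gt hZpos), Real.log_exp]
        ring
      rw [Finset.sum_congr rfl (fun i _ => hterm i), Finset.sum_sub_distrib,
        ← Finset.sum_mul, hνsP.2, one_mul]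
    have hval : psi X p α = (∑ a, α a * X.mulVec νs a) - phi X p (X.mulVec νs) := by
      rw [hdot, hpsi]
      have h1 := hphi_le νs hνsP
      have h2 := hphi_ge νs hνsP
      rw [hrel] at h1
      linarith
    exact hb ⟨νs, hνsP, hval⟩
end

section
/- Let α ∈ ℝ^k, let ν* = p^{Xᵀα} be the exponentially tilted measure, and let x = Xν*. Then φ(x|p) = S(ν*|p) = αᵀx − ψ(α|p), and ν* is the unique minimizer: for every positive probability vector ν with Xν = x and ν ≠ ν*, S(ν|p) > S(ν*|p). -/
open Real

lemma gibbs_nonneg {n : ℕ} {ν w : Fin n → ℝ} (hν : IsPPV ν) (hw : IsPPV w) :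
    0 ≤ relEnt ν w := by
  have key : ∑ i, ν i * Real.log (w i / ν i) ≤ 0 := by
    calc ∑ i, ν i * Real.log (w i / ν i) ≤ ∑ i, (w i - ν i) := by
          apply Finset.sum_le_sum
          intro i _
          have h1 : ν i * Real.log (w i / ν i) ≤ ν i * (w i / ν i - 1) :=
            mul_le_mul_of_nonneg_left
              (Real.log_le_sub_one_of_pos (div_pos (hw.1 i) (hν.1 i))) (hν.1 i).le
          have h0 : ν i ≠ 0 := (hν.1 i).ne'
          have heq : ν i * (w i / ν i - 1) = w i - ν i := by field_simp
          linarith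
      _ = 0 := by rw [Finset.sum_sub_distrib, hν.2, hw.2]; ring
  have : relEnt ν w = -∑ i, ν i * Real.log (w i / ν i) := by
    rw [relEnt, ← Finset.sum_neg_distrib]
    refine Finset.sum_congr rfl fun i _ => ?_
    rw [show Real.log (ν i / w i) = - Real.log (w i / ν i) by
      rw [← Real.log_inv, inv_div]]
    ring
  linarith [this, key]

lemma gibbs_pos {n : ℕ} {ν w : Fin n → ℝ} (hν : IsPPV ν) (hw : IsPPV w)
    (hne : ν ≠ w) : 0 < relEnt ν w := by
  obtain ⟨j, hj⟩ := Function.ne_iff.mp hne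
  have key : ∑ i, ν i * Real.log (w i / ν i) < 0 := by
    have hlt : ∑ i, ν i * Real.log (w i / ν i) < ∑ i, (w i - ν i) := by
      apply Finset.sum_lt_sum
      · intro i _
        have h1 : ν i * Real.log (w i / ν i) ≤ ν i * (w i / ν i - 1) :=
          mul_le_mul_of_nonneg_left
            (Real.log_le_sub_one_of_pos (div_pos (hw.1 i) (hν.1 i))) (hν.1 i).le
        have h0 : ν i ≠ 0 := (hν.1 i).ne'
        have heq : ν i * (w i / ν i - 1) = w i - ν i := by field_simp
        linarith
      · refine ⟨j, Finset.mem_univ j, ?_⟩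
        have hr : w j / ν j ≠ 1 := by
          intro h
          exact hj ((div_eq_one_iff_eq (hν.1 j).ne').mp h).symm
        have h1 : ν j * Real.log (w j / ν j) < ν j * (w j / ν j - 1) :=
          (mul_lt_mul_iff_right₀ (hν.1 j)).mpr
            (Real.log_lt_sub_one_of_pos (div_pos (hw.1 j) (hν.1 j)) hr)
        have h0 : ν j ≠ 0 := (hν.1 j).ne'
        have heq : ν j * (w j / ν j - 1) = w j - ν j := by field_simp
        linarith
    have : ∑ i, (w i - ν i) = 0 := by rw [Finset.sum_sub_distrib, hν.2, hw.2]; ring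
    linarith
  have heq : relEnt ν w = -∑ i, ν i * Real.log (w i / ν i) := by
    rw [relEnt, ← Finset.sum_neg_distrib]
    refine Finset.sum_congr rfl fun i _ => ?_
    rw [show Real.log (ν i / w i) = - Real.log (w i / ν i) by
      rw [← Real.log_inv, inv_div]]
    ring
  linarith

/-- For `ν* = p^{Xᵀα}` and `x = Xν*`: `φ(x|p) = S(ν*|p) = αᵀx − ψ(α|p)`, and `ν*` is
the unique minimizer of `S(·|p)` over positive probability vectors `ν` with `Xν = x`. -/
theorem tilted_is_unique_minimizer
    {n k : ℕ} (hn : 1 ≤ n) (hk : 1 ≤ k)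
    (p : Fin n → ℝ) (hp : IsPPV p) (X : Matrix (Fin k) (Fin n) ℝ) (α : Fin k → ℝ) :
    phi X p (X.mulVec (tilted p (fun i => ∑ a, α a * X a i)))
        = relEnt (tilted p (fun i => ∑ a, α a * X a i)) p ∧
    relEnt (tilted p (fun i => ∑ a, α a * X a i)) p
        = (∑ a, α a * X.mulVec (tilted p (fun i => ∑ a, α a * X a i)) a)
            - psi X p α ∧
    (∀ ν : Fin n → ℝ, IsPPV ν →
        X.mulVec ν = X.mulVec (tilted p (fun i => ∑ a, α a * X a i)) →
        ν ≠ tilted p (fun i => ∑ a, α a * X a i) →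
        relEnt (tilted p (fun i => ∑ a, α a * X a i)) p < relEnt ν p) := by
  have hnn : Nonempty (Fin n) := ⟨⟨0, hn⟩⟩
  set μ : Fin n → ℝ := fun i => ∑ a, α a * X a i with hμ
  set ν' : Fin n → ℝ := tilted p μ with hν'
  set F : ℝ := freeEnergy p μ with hF
  -- positivity of the sum in the free energy
  have hsumpos : 0 < ∑ i, p i * Real.exp (μ i) :=
    Finset.sum_pos (fun i _ => mul_pos (hp.1 i) (Real.exp_pos _)) Finset.univ_nonempty
  have hexpF : Real.exp F = ∑ i, p i * Real.exp (μ i) := Real.exp_log hsumpos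
  -- ν' is a PPV
  have hν'pos : ∀ i, 0 < ν' i := fun i => mul_pos (hp.1 i) (Real.exp_pos _)
  have hν'sum : (∑ i, ν' i) = 1 := by
    have : ∑ i, ν' i = (∑ i, p i * Real.exp (μ i)) * Real.exp (-F) := by
      rw [Finset.sum_mul]
      refine Finset.sum_congr rfl fun i _ => ?_
      rw [hν', tilted, sub_eq_add_neg, Real.exp_add]
      ring
    rw [this, ← hexpF, ← Real.exp_add]
    simp
  have hν'ppv : IsPPV ν' := ⟨hν'pos, hν'sum⟩
  -- decomposition
  have decomp : ∀ ν : Fin n → ℝ, IsPPV ν →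
      relEnt ν p = relEnt ν ν' + (∑ a, α a * X.mulVec ν a) - F := by
    intro ν hνp
    have hlog : ∀ i, Real.log (ν i / p i) = Real.log (ν i / ν' i) + μ i - F := by
      intro i
      rw [Real.log_div (hνp.1 i).ne' (hp.1 i).ne',
          Real.log_div (hνp.1 i).ne' (hν'pos i).ne', hν', tilted,
          Real.log_mul (hp.1 i).ne' (Real.exp_ne_zero _), Real.log_exp]
      ring
    have hsum1 : relEnt ν p = relEnt ν ν' + (∑ i, ν i * μ i) - (∑ i, ν i) * F := by
      rw [relEnt, relEnt, Finset.sum_mul, ← Finset.sum_add_distrib, ← Finset.sum_sub_distrib]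
      refine Finset.sum_congr rfl fun i _ => ?_
      rw [hlog i]; ring
    have hsum2 : (∑ i, ν i * μ i) = ∑ a, α a * X.mulVec ν a := by
      simp only [hμ, Matrix.mulVec, dotProduct, Finset.mul_sum, Finset.sum_mul]
      rw [Finset.sum_comm]
      exact Finset.sum_congr rfl fun a _ => Finset.sum_congr rfl fun i _ => by ring
    rw [hsum1, hsum2, hνp.2, one_mul]
  have hself : relEnt ν' ν' = 0 := by
    rw [relEnt]
    refine Finset.sum_eq_zero fun i _ => ?_
    rw [div_self (hν'pos i).ne', Real.log_one, mul_zero]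
  have hpsi : psi X p α = F := rfl
  have hval : relEnt ν' p = (∑ a, α a * X.mulVec ν' a) - F := by
    have := decomp ν' hν'ppv
    rw [hself] at this
    linarith
  refine ⟨?_, by rw [hpsi]; exact hval, ?_⟩
  · -- phi = relEnt ν' p
    apply le_antisymm
    · have hmem : relEnt ν' p ∈
          { t : ℝ | ∃ ν : Fin n → ℝ, IsPPV ν ∧ X.mulVec ν = X.mulVec ν' ∧ t = relEnt ν p } :=
        ⟨ν', hν'ppv, rfl, rfl⟩
      have hbdd : BddBelow
          { t : ℝ | ∃ ν : Fin n → ℝ, IsPPV ν ∧ X.mulVec ν = X.mulVec ν' ∧ t = relEnt ν p } := by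
        refine ⟨relEnt ν' p, ?_⟩
        rintro t ⟨ν, hνp, hXν, rfl⟩
        have h1 := decomp ν hνp
        have h2 := gibbs_nonneg hνp hν'ppv
        rw [hXν] at h1
        linarith [hval]
      exact csInf_le hbdd hmem
    · have hne : Set.Nonempty
          { t : ℝ | ∃ ν : Fin n → ℝ, IsPPV ν ∧ X.mulVec ν = X.mulVec ν' ∧ t = relEnt ν p } :=
        ⟨relEnt ν' p, ν', hν'ppv, rfl, rfl⟩
      apply le_csInf hne
      rintro t ⟨ν, hνp, hXν, rfl⟩
      have h1 := decomp ν hνp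
      have h2 := gibbs_nonneg hνp hν'ppv
      rw [hXν] at h1
      linarith [hval]
  · intro ν hνp hXν hne
    have h1 := decomp ν hνp
    have h2 := gibbs_pos hνp hν'ppv hne
    rw [hXν] at h1
    linarith [hval]
end

section
/- Fenchel–Young inequality for the contracted rate function: for every α ∈ ℝ^k and every x of the form x = Xν for some positive probability vector ν, the entropy production σ(x,α|p) = φ(x|p) + ψ(α|p) − αᵀx is nonnegative, and it equals zero if and only if x = X p^{Xᵀα}. -/
open Real

lemma sub_le_mul_log' {a b : ℝ} (ha : 0 ≤ a) (hb : 0 < b) :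
    a - b ≤ a * Real.log (a / b) := by
  rcases ha.eq_or_lt with h | h
  · simp [← h]; linarith
  · have hba : 0 < b / a := div_pos hb h
    have h1 := Real.log_le_sub_one_of_pos hba
    have hlog : Real.log (a / b) = - Real.log (b / a) := by
      rw [← Real.log_inv]; congr 1; field_simp
    rw [hlog]
    have h2 : b / a * a = b := div_mul_cancel₀ b h.ne'
    nlinarith [mul_le_mul_of_nonneg_right h1 h.le]

lemma sub_lt_mul_log' {a b : ℝ} (ha : 0 ≤ a) (hb : 0 < b) (hab : a ≠ b) :
    a - b < a * Real.log (a / b) := by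
  rcases ha.eq_or_lt with h | h
  · simp [← h]; linarith
  · have hba : 0 < b / a := div_pos hb h
    have hne : b / a ≠ 1 := by
      intro hcontra
      apply hab
      have := (div_eq_one_iff_eq h.ne').mp hcontra
      linarith
    have h1 := Real.log_lt_sub_one_of_pos hba hne
    have hlog : Real.log (a / b) = - Real.log (b / a) := by
      rw [← Real.log_inv]; congr 1; field_simp
    rw [hlog]
    have h2 : b / a * a = b := div_mul_cancel₀ b h.ne'
    nlinarith [mul_lt_mul_of_pos_right h1 h]


lemma gibbs_nonneg_s10 {n : ℕ} {ν q : Fin n → ℝ} (hν : ∀ i, 0 ≤ ν i) (hq : ∀ i, 0 < q i)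
    (hν1 : ∑ i, ν i = 1) (hq1 : ∑ i, q i = 1) : 0 ≤ relEnt ν q := by
  have h : ∑ i, (ν i - q i) ≤ ∑ i, ν i * Real.log (ν i / q i) :=
    Finset.sum_le_sum fun i _ => sub_le_mul_log' (hν i) (hq i)
  rw [Finset.sum_sub_distrib, hν1, hq1] at h
  simpa [relEnt] using h

lemma gibbs_pos_s10 {n : ℕ} {ν q : Fin n → ℝ} (hν : ∀ i, 0 ≤ ν i) (hq : ∀ i, 0 < q i)
    (hν1 : ∑ i, ν i = 1) (hq1 : ∑ i, q i = 1) (hne : ν ≠ q) : 0 < relEnt ν q := by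
  obtain ⟨j, hj⟩ := Function.ne_iff.mp hne
  have h : ∑ i, (ν i - q i) < ∑ i, ν i * Real.log (ν i / q i) :=
    Finset.sum_lt_sum (fun i _ => sub_le_mul_log' (hν i) (hq i))
      ⟨j, Finset.mem_univ j, sub_lt_mul_log' (hν j) (hq j) hj⟩
  rw [Finset.sum_sub_distrib, hν1, hq1] at h
  simpa [relEnt] using h

-- tilted is PPV
lemma tilted_isPPV {n : ℕ} (hn : 1 ≤ n) {p : Fin n → ℝ} (hp : IsPPV p) (μ : Fin n → ℝ) :
    IsPPV (tilted p μ) := by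
  have : NeZero n := ⟨by omega⟩
  have hspos : 0 < ∑ i, p i * Real.exp (μ i) :=
    Finset.sum_pos (fun i _ => mul_pos (hp.1 i) (Real.exp_pos _)) Finset.univ_nonempty
  constructor
  · intro i; exact mul_pos (hp.1 i) (Real.exp_pos _)
  · have : ∑ i, tilted p μ i = (∑ i, p i * Real.exp (μ i)) * Real.exp (-(freeEnergy p μ)) := by
      rw [Finset.sum_mul]
      refine Finset.sum_congr rfl fun i _ => ?_
      rw [tilted, Real.exp_sub, Real.exp_neg]
      ring
    rw [this, freeEnergy, Real.exp_neg, Real.exp_log hspos]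
    field_simp

-- key identity
lemma relEnt_decomp {n k : ℕ} (hn : 1 ≤ n) (p : Fin n → ℝ) (hp : IsPPV p)
    (X : Matrix (Fin k) (Fin n) ℝ) (α : Fin k → ℝ) (ν : Fin n → ℝ)
    (hν : ∀ i, 0 ≤ ν i) (hν1 : ∑ i, ν i = 1) :
    relEnt ν p = relEnt ν (tilted p (fun i => ∑ a, α a * X a i))
      + (∑ a, α a * X.mulVec ν a) - psi X p α := by
  set μ : Fin n → ℝ := fun i => ∑ a, α a * X a i with hμ
  have hpsi : psi X p α = freeEnergy p μ := rfl
  set q := tilted p μ with hqdef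
  have hterm : ∀ i, ν i * Real.log (ν i / p i)
      = ν i * Real.log (ν i / q i) + ν i * (μ i - freeEnergy p μ) := by
    intro i
    rcases (hν i).eq_or_lt with h | h
    · simp [← h]
    · have hpi := hp.1 i
      have hqi : 0 < q i := mul_pos hpi (Real.exp_pos _)
      rw [Real.log_div h.ne' hpi.ne', Real.log_div h.ne' hqi.ne', hqdef, tilted,
        Real.log_mul hpi.ne' (Real.exp_pos _).ne', Real.log_exp]
      ring
  have hsum : relEnt ν p = relEnt ν q + ∑ i, ν i * (μ i - freeEnergy p μ) := by
    rw [relEnt, relEnt, ← Finset.sum_add_distrib]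
    exact Finset.sum_congr rfl fun i _ => hterm i
  have hlin : ∑ i, ν i * (μ i - freeEnergy p μ)
      = (∑ a, α a * X.mulVec ν a) - freeEnergy p μ := by
    have h1 : ∑ i, ν i * (μ i - freeEnergy p μ)
        = (∑ i, ν i * μ i) - (∑ i, ν i) * freeEnergy p μ := by
      rw [Finset.sum_mul]
      rw [← Finset.sum_sub_distrib]
      exact Finset.sum_congr rfl fun i _ => by ring
    rw [h1, hν1, one_mul]
    congr 1
    rw [hμ]
    simp only [Matrix.mulVec, dotProduct, Finset.mul_sum]
    rw [Finset.sum_comm]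
    exact Finset.sum_congr rfl fun a _ => Finset.sum_congr rfl fun i _ => by ring
  rw [hsum, hlin, hpsi]; ring

/-- Fenchel–Young inequality for the contracted rate function: for every `α ∈ ℝ^k` and
every attainable empirical mean `x = Xν`, the entropy production
`σ(x,α|p) = φ(x|p) + ψ(α|p) − αᵀx` is nonnegative, with equality iff `x = X p^{Xᵀα}`. -/
theorem fenchel_young_contraction
    {n k : ℕ} (hn : 1 ≤ n) (hk : 1 ≤ k)
    (p : Fin n → ℝ) (hp : IsPPV p) (X : Matrix (Fin k) (Fin n) ℝ)
    (α : Fin k → ℝ) (x : Fin k → ℝ)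
    (hx : ∃ ν : Fin n → ℝ, IsPPV ν ∧ X.mulVec ν = x) :
    0 ≤ phi X p x + psi X p α - ∑ a, α a * x a ∧
    (phi X p x + psi X p α - (∑ a, α a * x a) = 0 ↔
      x = X.mulVec (tilted p (fun i => ∑ a, α a * X a i))) := by
  have hnz : NeZero n := ⟨by omega⟩
  set μ : Fin n → ℝ := fun i => ∑ a, α a * X a i with hμ
  set q : Fin n → ℝ := tilted p μ with hqdef
  have hqPPV : IsPPV q := tilted_isPPV hn hp μ
  set S := { t : ℝ | ∃ ν : Fin n → ℝ, IsPPV ν ∧ X.mulVec ν = x ∧ t = relEnt ν p } with hS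
  set L : ℝ := (∑ a, α a * x a) - psi X p α with hL
  have hdecomp : ∀ ν : Fin n → ℝ, (∀ i, 0 ≤ ν i) → (∑ i, ν i) = 1 →
      relEnt ν p = relEnt ν q + (∑ a, α a * X.mulVec ν a) - psi X p α :=
    fun ν h1 h2 => relEnt_decomp hn p hp X α ν h1 h2
  have hlb : ∀ t ∈ S, L ≤ t := by
    rintro t ⟨ν, hνP, hνx, rfl⟩
    have h1 := hdecomp ν (fun i => (hνP.1 i).le) hνP.2
    rw [hνx] at h1
    have h2 := gibbs_nonneg_s10 (fun i => (hνP.1 i).le) hqPPV.1 hνP.2 hqPPV.2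
    rw [hL, h1]; linarith
  obtain ⟨ν₀, hν₀P, hν₀x⟩ := hx
  have hSne : S.Nonempty := ⟨relEnt ν₀ p, ν₀, hν₀P, hν₀x, rfl⟩
  have hbdd : BddBelow S := ⟨L, hlb⟩
  have hphi : phi X p x = sInf S := rfl
  have hphi_ge : L ≤ phi X p x := by rw [hphi]; exact le_csInf hSne hlb
  refine ⟨by rw [hL] at hphi_ge; linarith, ?_, ?_⟩
  · intro h0
    by_contra hne
    -- compactness argument
    set K := {ν : Fin n → ℝ | (∀ i, 0 ≤ ν i) ∧ (∑ i, ν i) = 1 ∧ X.mulVec ν = x} with hK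
    have hKclosed : IsClosed K := by
      have h1 : IsClosed {ν : Fin n → ℝ | ∀ i, 0 ≤ ν i} := by
        have : {ν : Fin n → ℝ | ∀ i, 0 ≤ ν i} = ⋂ i, {ν | 0 ≤ ν i} := by ext ν; simp
        rw [this]
        exact isClosed_iInter fun i => isClosed_le continuous_const (continuous_apply i)
      have h2 : IsClosed {ν : Fin n → ℝ | (∑ i, ν i) = 1} :=
        isClosed_eq (continuous_finset_sum _ fun i _ => continuous_apply i) continuous_const
      have hmv : Continuous fun ν : Fin n → ℝ => X.mulVec ν :=
        X.mulVecLin.continuous_of_finiteDimensional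
      have h3 : IsClosed {ν : Fin n → ℝ | X.mulVec ν = x} := isClosed_eq hmv continuous_const
      have : K = {ν : Fin n → ℝ | ∀ i, 0 ≤ ν i} ∩ ({ν | (∑ i, ν i) = 1} ∩ {ν | X.mulVec ν = x}) := by
        ext ν; simp [hK, and_assoc]
      rw [this]
      exact h1.inter (h2.inter h3)
    have hKbdd : Bornology.IsBounded K := by
      apply (Metric.isBounded_closedBall (x := (0 : Fin n → ℝ)) (r := 1)).subset
      intro ν hν
      rw [Metric.mem_closedBall, dist_zero_right]
      rw [pi_norm_le_iff_of_nonneg zero_le_one]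
      intro i
      rw [Real.norm_eq_abs, abs_le]
      constructor
      · linarith [hν.1 i]
      · calc ν i ≤ ∑ j, ν j := Finset.single_le_sum (fun j _ => hν.1 j) (Finset.mem_univ i)
          _ = 1 := hν.2.1
    have hKcomp : IsCompact K := Metric.isCompact_of_isClosed_isBounded hKclosed hKbdd
    have hKne : K.Nonempty := ⟨ν₀, fun i => (hν₀P.1 i).le, hν₀P.2, hν₀x⟩
    set g : (Fin n → ℝ) → ℝ :=
      fun ν => ∑ i, (ν i * Real.log (ν i) - ν i * Real.log (q i)) with hg
    have hgcont : Continuous g := by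
      apply continuous_finset_sum
      intro i _
      exact (Real.continuous_mul_log.comp (continuous_apply i)).sub
        ((continuous_apply i).mul continuous_const)
    have hgeq : ∀ ν : Fin n → ℝ, (∀ i, 0 ≤ ν i) → g ν = relEnt ν q := by
      intro ν hν
      rw [hg, relEnt]
      refine Finset.sum_congr rfl fun i _ => ?_
      rcases (hν i).eq_or_lt with h | h
      · simp [← h]
      · rw [Real.log_div h.ne' (hqPPV.1 i).ne']; ring
    obtain ⟨νm, hνmK, hmin⟩ := hKcomp.exists_isMinOn hKne hgcont.continuousOn
    have hνmne : νm ≠ q := by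
      intro h
      exact hne (by rw [← hνmK.2.2, h])
    have hεpos : 0 < g νm := by
      rw [hgeq νm hνmK.1]
      exact gibbs_pos_s10 hνmK.1 hqPPV.1 hνmK.2.1 hqPPV.2 hνmne
    have hlb2 : ∀ t ∈ S, L + g νm ≤ t := by
      rintro t ⟨ν, hνP, hνx, rfl⟩
      have h1 := hdecomp ν (fun i => (hνP.1 i).le) hνP.2
      rw [hνx] at h1
      have hνK : ν ∈ K := ⟨fun i => (hνP.1 i).le, hνP.2, hνx⟩
      have h2 : g νm ≤ g ν := hmin hνK
      rw [hgeq ν (fun i => (hνP.1 i).le)] at h2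
      rw [hL, h1]; linarith
    have hphi_ge2 : L + g νm ≤ phi X p x := by rw [hphi]; exact le_csInf hSne hlb2
    rw [hL] at hphi_ge2
    linarith
  · intro hxq
    have hqfeas : relEnt q p ∈ S := ⟨q, hqPPV, hxq.symm, rfl⟩
    have hqq : relEnt q q = 0 := by
      rw [relEnt]
      refine Finset.sum_eq_zero fun i _ => ?_
      rw [div_self (hqPPV.1 i).ne', Real.log_one, mul_zero]
    have hqval : relEnt q p = L := by
      have h1 := hdecomp q (fun i => (hqPPV.1 i).le) hqPPV.2
      rw [← hxq, hqq] at h1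
      rw [hL, h1]; ring
    have hle : phi X p x ≤ L := by
      rw [hphi]; rw [← hqval]; exact csInf_le hbdd hqfeas
    have := le_antisymm hle hphi_ge
    rw [hL] at this
    linarith
end
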